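/- Under hypotheses (A₁) and (A₂), the operator A (where Aη is the unique solution of -u'' + M²u = f(t,η) + M²η with periodic boundary conditions) is monotone nondecreasing on the order interval [α, β]: if η₁ ≤ η₂ pointwise with α ≤ η₁ ≤ η₂ ≤ β, then Aη₁ ≤ Aη₂ pointwise on [0,2π]. -/

import Mathlib

/-!
With `w = u₁ - u₂`, hypothesis (A₁) turns the two equations into `M² w ≤ w''` on `[0, 2π]`,
so `w'' > 0` wherever `w > 0`. By periodicity `w` attains its maximum at a critical point `s`
in `[0, 2π)` (at an endpoint the one-sided derivatives have opposite signs and agree). If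
`w s > 0`, then `w'` increases strictly to the right of `s` from `w' s = 0`, so `w` exceeds its
maximum: contradiction.
-/

open Real Set Filter Topology

section MaximumPrinciple

variable {w : ℝ → ℝ} {a b : ℝ}

lemma deriv_nonpos_of_isMaxOn_Icc_left (hw : DifferentiableAt ℝ w a) (hab : a < b)
    (hmax : IsMaxOn w (Icc a b) a) : deriv w a ≤ 0 := by
  have hslope : Tendsto (slope w a) (𝓝[>] a) (𝓝 (deriv w a)) :=
    (hasDerivAt_iff_tendsto_slope.1 hw.hasDerivAt).mono_left
      (nhdsWithin_mono _ fun _ ht => ne_of_gt ht)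
  refine le_of_tendsto hslope ?_
  filter_upwards [Ioc_mem_nhdsGT hab] with t ht
  rw [slope_def_field]
  exact div_nonpos_of_nonpos_of_nonneg (sub_nonpos.2 (hmax (Ioc_subset_Icc_self ht)))
    (sub_nonneg.2 ht.1.le)

lemma deriv_nonneg_of_isMaxOn_Icc_right (hw : DifferentiableAt ℝ w b) (hab : a < b)
    (hmax : IsMaxOn w (Icc a b) b) : 0 ≤ deriv w b := by
  have hslope : Tendsto (slope w b) (𝓝[<] b) (𝓝 (deriv w b)) :=
    (hasDerivAt_iff_tendsto_slope.1 hw.hasDerivAt).mono_left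
      (nhdsWithin_mono _ fun _ ht => ne_of_lt ht)
  refine ge_of_tendsto hslope ?_
  filter_upwards [Ico_mem_nhdsLT hab] with t ht
  rw [slope_def_field]
  exact div_nonneg_of_nonpos (sub_nonpos.2 (hmax (Ico_subset_Icc_self ht)))
    (sub_nonpos.2 ht.2.le)

lemma exists_isMaxOn_Icc_deriv_eq_zero_of_periodic (hw : Differentiable ℝ w) (hab : a < b)
    (hper : w a = w b) (hper' : deriv w a = deriv w b) :
    ∃ s ∈ Ico a b, IsMaxOn w (Icc a b) s ∧ deriv w s = 0 := by
  obtain ⟨t₀, ht₀, hmax⟩ :=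
    isCompact_Icc.exists_isMaxOn (nonempty_Icc.2 hab.le) hw.continuous.continuousOn
  by_cases hint : t₀ ∈ Ioo a b
  · exact ⟨t₀, Ioo_subset_Ico_self hint, hmax,
      (hmax.isLocalMax (Icc_mem_nhds hint.1 hint.2)).deriv_eq_zero⟩
  have hwt₀ : w t₀ = w a := by
    rcases eq_endpoints_or_mem_Ioo_of_mem_Icc ht₀ with h | h | h
    · rw [h]
    · rw [h, hper]
    · exact absurd h hint
  have hmax_a : IsMaxOn w (Icc a b) a := fun t ht => hwt₀ ▸ hmax ht
  have hmax_b : IsMaxOn w (Icc a b) b := fun t ht => hper ▸ hmax_a ht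
  exact ⟨a, left_mem_Ico.2 hab, hmax_a, le_antisymm (deriv_nonpos_of_isMaxOn_Icc_left (hw a) hab
    hmax_a) (hper' ▸ deriv_nonneg_of_isMaxOn_Icc_right (hw b) hab hmax_b)⟩

lemma nonpos_of_isMaxOn_Icc_of_deriv_eq_zero (hw : ContDiff ℝ 2 w)
    (hconvex : ∀ t ∈ Icc a b, 0 < w t → 0 < deriv (deriv w) t) {s : ℝ} (hs : s ∈ Ico a b)
    (hmax : IsMaxOn w (Icc a b) s) (hcrit : deriv w s = 0) : w s ≤ 0 := by
  by_contra! hpos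
  obtain ⟨u, hsu, hu⟩ : ∃ u, s < u ∧ Icc s u ⊆ {t | 0 < w t} :=
    mem_nhdsGE_iff_exists_Icc_subset.1 <| nhdsWithin_le_nhds <|
      hw.continuous.continuousAt.eventually (eventually_gt_nhds hpos)
  set r := min u b
  have hsr : s < r := lt_min hsu hs.2
  have hsub : Icc s r ⊆ Icc a b := Icc_subset_Icc hs.1 (min_le_right _ _)
  have hpos_on : ∀ t ∈ Icc s r, 0 < w t :=
    fun t ht => hu (Icc_subset_Icc_right (min_le_left _ _) ht)
  have hderiv_mono : StrictMonoOn (deriv w) (Icc s r) := by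
    refine strictMonoOn_of_deriv_pos (convex_Icc _ _)
      (hw.continuous_deriv one_le_two).continuousOn fun t ht => ?_
    rw [interior_Icc] at ht
    exact hconvex t (hsub (Ioo_subset_Icc_self ht)) (hpos_on t (Ioo_subset_Icc_self ht))
  have hw_mono : StrictMonoOn w (Icc s r) := by
    refine strictMonoOn_of_deriv_pos (convex_Icc _ _) hw.continuous.continuousOn fun t ht => ?_
    rw [interior_Icc] at ht
    rw [← hcrit]
    exact hderiv_mono (left_mem_Icc.2 hsr.le) (Ioo_subset_Icc_self ht) ht.1
  have hlt := hw_mono (left_mem_Icc.2 hsr.le) (right_mem_Icc.2 hsr.le) hsr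
  exact (hmax (hsub (right_mem_Icc.2 hsr.le))).not_gt hlt

theorem nonpos_of_periodic_of_deriv2_pos (hw : ContDiff ℝ 2 w) (hab : a < b)
    (hconvex : ∀ t ∈ Icc a b, 0 < w t → 0 < deriv (deriv w) t)
    (hper : w a = w b) (hper' : deriv w a = deriv w b) : ∀ t ∈ Icc a b, w t ≤ 0 := by
  obtain ⟨s, hs, hmax, hcrit⟩ :=
    exists_isMaxOn_Icc_deriv_eq_zero_of_periodic (hw.differentiable two_ne_zero) hab hper hper'
  exact fun t ht =>
    (hmax ht).trans (nonpos_of_isMaxOn_Icc_of_deriv_eq_zero hw hconvex hs hmax hcrit)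

end MaximumPrinciple

lemma deriv_deriv_sub {u v : ℝ → ℝ} (hu : ContDiff ℝ 2 u) (hv : ContDiff ℝ 2 v) (t : ℝ) :
    deriv (deriv (u - v)) t = deriv (deriv u) t - deriv (deriv v) t := by
  have hderiv : deriv (u - v) = deriv u - deriv v :=
    funext fun x => deriv_sub (hu.differentiable two_ne_zero x) (hv.differentiable two_ne_zero x)
  rw [hderiv, deriv_sub (hu.differentiable_deriv_two t) (hv.differentiable_deriv_two t)]

theorem stmt14_general (M : ℝ) (hM : 0 < M) (f : ℝ → ℝ → ℝ)
    (α β : ℝ → ℝ)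
    (hlip : ∀ t ∈ Set.Icc (0:ℝ) (2 * π), ∀ u v : ℝ,
      α t ≤ v → v ≤ u → u ≤ β t → f t u - f t v ≥ -(M ^ 2) * (u - v))
    (η₁ η₂ : ℝ → ℝ)
    (hη₁mem : ∀ t ∈ Set.Icc (0:ℝ) (2 * π), α t ≤ η₁ t ∧ η₁ t ≤ β t)
    (hη₂mem : ∀ t ∈ Set.Icc (0:ℝ) (2 * π), α t ≤ η₂ t ∧ η₂ t ≤ β t)
    (hη₁₂ : ∀ t ∈ Set.Icc (0:ℝ) (2 * π), η₁ t ≤ η₂ t)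
    (u₁ u₂ : ℝ → ℝ) (hu₁ : ContDiff ℝ 2 u₁) (hu₂ : ContDiff ℝ 2 u₂)
    (heq₁ : ∀ t ∈ Set.Icc (0:ℝ) (2 * π),
      -(deriv (deriv u₁) t) + M ^ 2 * u₁ t = f t (η₁ t) + M ^ 2 * η₁ t)
    (heq₂ : ∀ t ∈ Set.Icc (0:ℝ) (2 * π),
      -(deriv (deriv u₂) t) + M ^ 2 * u₂ t = f t (η₂ t) + M ^ 2 * η₂ t)
    (hbc₁0 : u₁ 0 = u₁ (2 * π)) (hbc₁1 : deriv u₁ 0 = deriv u₁ (2 * π))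
    (hbc₂0 : u₂ 0 = u₂ (2 * π)) (hbc₂1 : deriv u₂ 0 = deriv u₂ (2 * π)) :
    ∀ t ∈ Set.Icc (0:ℝ) (2 * π), u₁ t ≤ u₂ t := by
  have hsubsol :
      ∀ t ∈ Icc (0:ℝ) (2 * π), M ^ 2 * (u₁ - u₂) t ≤ deriv (deriv (u₁ - u₂)) t := by
    intro t ht
    have := hlip t ht (η₂ t) (η₁ t) (hη₁mem t ht).1 (hη₁₂ t ht) (hη₂mem t ht).2
    rw [deriv_deriv_sub hu₁ hu₂, Pi.sub_apply]
    linarith [heq₁ t ht, heq₂ t ht]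
  have hconvex :
      ∀ t ∈ Icc (0:ℝ) (2 * π), 0 < (u₁ - u₂) t → 0 < deriv (deriv (u₁ - u₂)) t := fun t ht hpos =>
    (mul_pos (pow_pos hM 2) hpos).trans_le (hsubsol t ht)
  have hper : (u₁ - u₂) 0 = (u₁ - u₂) (2 * π) := by simp only [Pi.sub_apply, hbc₁0, hbc₂0]
  have hper' : deriv (u₁ - u₂) 0 = deriv (u₁ - u₂) (2 * π) := by
    rw [deriv_sub (hu₁.differentiable two_ne_zero 0) (hu₂.differentiable two_ne_zero 0),
      deriv_sub (hu₁.differentiable two_ne_zero _) (hu₂.differentiable two_ne_zero _),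
      hbc₁1, hbc₂1]
  intro t ht
  exact sub_nonpos.1 <|
    nonpos_of_periodic_of_deriv2_pos (hu₁.sub hu₂) two_pi_pos hconvex hper hper' t ht

theorem stmt14 (M : ℝ) (hM : 0 < M) (f : ℝ → ℝ → ℝ)
    (hf : Continuous (Function.uncurry f))
    (α β : ℝ → ℝ) (hα : ContDiff ℝ 2 α) (hβ : ContDiff ℝ 2 β)
    (hαβ : ∀ t ∈ Set.Icc (0:ℝ) (2 * π), α t ≤ β t)
    (hlip : ∀ t ∈ Set.Icc (0:ℝ) (2 * π), ∀ u v : ℝ,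
      α t ≤ v → v ≤ u → u ≤ β t → f t u - f t v ≥ -(M ^ 2) * (u - v))
    (hαlow : ∀ t ∈ Set.Icc (0:ℝ) (2 * π), -(deriv (deriv α) t) ≤ f t (α t))
    (hα0 : α 0 - α (2 * π) < 0) (hα1 : deriv α 0 - deriv α (2 * π) ≥ 0)
    (hβup : ∀ t ∈ Set.Icc (0:ℝ) (2 * π), -(deriv (deriv β) t) ≥ f t (β t))
    (hβ0 : β 0 - β (2 * π) > 0) (hβ1 : deriv β 0 - deriv β (2 * π) ≤ 0)
    (η₁ η₂ : ℝ → ℝ) (hη₁ : Continuous η₁) (hη₂ : Continuous η₂)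
    (hη₁mem : ∀ t ∈ Set.Icc (0:ℝ) (2 * π), α t ≤ η₁ t ∧ η₁ t ≤ β t)
    (hη₂mem : ∀ t ∈ Set.Icc (0:ℝ) (2 * π), α t ≤ η₂ t ∧ η₂ t ≤ β t)
    (hη₁₂ : ∀ t ∈ Set.Icc (0:ℝ) (2 * π), η₁ t ≤ η₂ t)
    (u₁ u₂ : ℝ → ℝ) (hu₁ : ContDiff ℝ 2 u₁) (hu₂ : ContDiff ℝ 2 u₂)
    (heq₁ : ∀ t ∈ Set.Icc (0:ℝ) (2 * π),
      -(deriv (deriv u₁) t) + M ^ 2 * u₁ t = f t (η₁ t) + M ^ 2 * η₁ t)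
    (heq₂ : ∀ t ∈ Set.Icc (0:ℝ) (2 * π),
      -(deriv (deriv u₂) t) + M ^ 2 * u₂ t = f t (η₂ t) + M ^ 2 * η₂ t)
    (hbc₁0 : u₁ 0 = u₁ (2 * π)) (hbc₁1 : deriv u₁ 0 = deriv u₁ (2 * π))
    (hbc₂0 : u₂ 0 = u₂ (2 * π)) (hbc₂1 : deriv u₂ 0 = deriv u₂ (2 * π)) :
    ∀ t ∈ Set.Icc (0:ℝ) (2 * π), u₁ t ≤ u₂ t :=
  stmt14_general M hM f α β hlip η₁ η₂ hη₁mem hη₂mem hη₁₂ u₁ u₂ hu₁ hu₂ heq₁ heq₂ hbc₁0 hbc₁1 hbc₂0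
    hbc₂1
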